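/- Transport representation of the Lagrangian curl: suppose v solves ∂_t v + ∇_A q = H in Ω×[0,T] with A(t) = (Dη)^{-1}, η = id + ∫₀ᵗ v. Then the A-curl satisfies the integral identity (curl_A v)(t) = curl v(0) + ∫₀ᵗ ε^{·ij} ∂_l v^j ∂_t A_i^l ds + ∫₀ᵗ (curl_A H) ds, where (curl_A v)^i = ε^{ijk}A_j^l∂_l v_k. -/

import Mathlib

open MeasureTheory Set

noncomputable section

abbrev E3 : Type := EuclideanSpace ℝ (Fin 3)

/-- The Levi-Civita symbol `ε^{ijk}`. -/
def eps : Fin 3 → Fin 3 → Fin 3 → ℝ := fun i j k =>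
  if (i, j, k) = (0, 1, 2) ∨ (i, j, k) = (1, 2, 0) ∨ (i, j, k) = (2, 0, 1) then 1
  else if (i, j, k) = (2, 1, 0) ∨ (i, j, k) = (1, 0, 2) ∨ (i, j, k) = (0, 2, 1) then -1
  else 0

/-- Jacobian matrix of the flow map, `(Jm η p) i j = ∂ᵢη^j(p)`, so that
`A := (Jm η p)⁻¹` realizes `∇ᵢ = A_i^j ∂_j`. -/
def Jm (η : ℝ × E3 → E3) (p : ℝ × E3) : Matrix (Fin 3) (Fin 3) ℝ :=
  Matrix.of fun i j => fderiv ℝ η p (0, EuclideanSpace.single i 1) j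

/-- Lagrangian curl: `(curl_A w)^m = ε^{mjk} A_j^l ∂_l w_k` with `A = (Jm η)⁻¹`. -/
def curlA (η w : ℝ × E3 → E3) (p : ℝ × E3) (m : Fin 3) : ℝ :=
  ∑ j, ∑ k, ∑ l, eps m j k * (Jm η p)⁻¹ j l *
    fderiv ℝ w p (0, EuclideanSpace.single l 1) k

/-- Eulerian curl: `(curl w)^m = ε^{mjk} ∂_j w_k`. -/
def curlE (w : ℝ × E3 → E3) (p : ℝ × E3) (m : Fin 3) : ℝ :=
  ∑ j, ∑ k, eps m j k * fderiv ℝ w p (0, EuclideanSpace.single j 1) k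

/-! ### Auxiliary lemmas -/

open scoped ContDiff

lemma eps_swap (m j k : Fin 3) : eps m k j = - eps m j k := by
  fin_cases m <;> fin_cases j <;> fin_cases k <;> simp [eps, Fin.ext_iff, Prod.ext_iff]

section Helpers

variable {F : Type*} [NormedAddCommGroup F] [NormedSpace ℝ F]

lemma smooth_fderiv_apply {f : ℝ × E3 → F} (hf : ContDiff ℝ ∞ f) (u : ℝ × E3) :
    ContDiff ℝ ∞ fun p => fderiv ℝ f p u :=
  (hf.fderiv_right (by norm_num)).clm_apply contDiff_const

lemma fderiv_swap {f : ℝ × E3 → F} (hf : ContDiff ℝ ∞ f) (p u w : ℝ × E3) :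
    fderiv ℝ (fun z => fderiv ℝ f z u) p w = fderiv ℝ (fun z => fderiv ℝ f z w) p u := by
  have hdf : Differentiable ℝ f := hf.differentiable (by norm_num)
  have h2 : Differentiable ℝ (fderiv ℝ f) :=
    (hf.fderiv_right (m := ∞) (by norm_num)).differentiable (by norm_num)
  have key : ∀ a b : ℝ × E3,
      fderiv ℝ (fun z => fderiv ℝ f z a) p b = fderiv ℝ (fderiv ℝ f) p b a := by
    intro a b
    rw [fderiv_clm_apply (h2 p) (differentiableAt_const a)]
    simp
  rw [key, key]
  exact second_derivative_symmetric (fun y => (hdf y).hasFDerivAt) (h2 p).hasFDerivAt w u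

lemma fderiv_coord {f : ℝ × E3 → E3} {p : ℝ × E3} (hf : DifferentiableAt ℝ f p) (k : Fin 3)
    (u : ℝ × E3) : fderiv ℝ (fun z => f z k) p u = fderiv ℝ f p u k := by
  have h : (fun z => f z k) = (EuclideanSpace.proj k : E3 →L[ℝ] ℝ) ∘ f := rfl
  rw [h, fderiv_comp p (ContinuousLinearMap.differentiableAt _) hf,
    ContinuousLinearMap.fderiv]
  rfl

lemma smooth_coord {f : ℝ × E3 → E3} (hf : ContDiff ℝ ∞ f) (k : Fin 3) :
    ContDiff ℝ ∞ (fun p => f p k) := by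
  have h : ContDiff ℝ ∞ (⇑(EuclideanSpace.proj (𝕜 := ℝ) k) ∘ f) :=
    (EuclideanSpace.proj (𝕜 := ℝ) k).contDiff.comp hf
  exact h

lemma contract_eq_zero (m : Fin 3) (c S : Fin 3 → Fin 3 → ℝ) (hS : ∀ l a, S l a = S a l) :
    ∑ j, ∑ k, ∑ l, ∑ a, eps m j k * c j l * c k a * S l a = 0 := by
  have h1 : ∑ j, ∑ k, ∑ l, ∑ a, eps m j k * c j l * c k a * S l a
      = ∑ j, ∑ k, ∑ l, ∑ a, eps m k j * c k a * c j l * S a l := by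
    rw [Finset.sum_comm]
    refine Finset.sum_congr rfl fun k _ => Finset.sum_congr rfl fun j _ => ?_
    rw [Finset.sum_comm]
  have h2 : ∀ j k l a : Fin 3,
      eps m k j * c k a * c j l * S a l = -(eps m j k * c j l * c k a * S l a) := by
    intro j k l a; rw [eps_swap, hS]; ring
  have h3 : ∑ j, ∑ k, ∑ l, ∑ a, eps m k j * c k a * c j l * S a l
      = -∑ j, ∑ k, ∑ l, ∑ a, eps m j k * c j l * c k a * S l a := by
    simp only [← Finset.sum_neg_distrib]
    exact Finset.sum_congr rfl fun j _ => Finset.sum_congr rfl fun k _ =>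
      Finset.sum_congr rfl fun l _ => Finset.sum_congr rfl fun a _ => h2 j k l a
  rw [h3] at h1
  linarith

lemma fderiv_mul_apply' {c d : ℝ × E3 → ℝ} {p : ℝ × E3} (hc : DifferentiableAt ℝ c p)
    (hd : DifferentiableAt ℝ d p) (u : ℝ × E3) :
    fderiv ℝ (fun z => c z * d z) p u = fderiv ℝ c p u * d p + c p * fderiv ℝ d p u := by
  rw [fderiv_fun_mul hc hd]
  simp only [ContinuousLinearMap.add_apply, ContinuousLinearMap.smul_apply, smul_eq_mul]
  ring

lemma fderiv_sub_apply' {c d : ℝ × E3 → ℝ} {p : ℝ × E3} (hc : DifferentiableAt ℝ c p)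
    (hd : DifferentiableAt ℝ d p) (u : ℝ × E3) :
    fderiv ℝ (fun z => c z - d z) p u = fderiv ℝ c p u - fderiv ℝ d p u := by
  rw [fderiv_fun_sub hc hd]; simp

lemma fderiv_sum_apply3 {f : Fin 3 → ℝ × E3 → ℝ} {p : ℝ × E3}
    (hf : ∀ c, DifferentiableAt ℝ (f c) p) (u : ℝ × E3) :
    fderiv ℝ (fun z => ∑ c, f c z) p u = ∑ c, fderiv ℝ (f c) p u := by
  rw [fderiv_fun_sum fun c _ => hf c]
  simp

lemma hasDerivAt_slice {g : ℝ × E3 → ℝ} (hg : Differentiable ℝ g) (x : E3) (s : ℝ) :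
    HasDerivAt (fun τ => g (τ, x)) (fderiv ℝ g (s, x) ((1 : ℝ), (0 : E3))) s := by
  have h1 : HasDerivAt (fun τ : ℝ => (τ, x)) ((1 : ℝ), (0 : E3)) s :=
    (hasDerivAt_id s).prodMk (hasDerivAt_const s x)
  exact (hg (s, x)).hasFDerivAt.comp_hasDerivAt s h1

end Helpers

section Jacobian

variable {η : ℝ × E3 → E3}

lemma smooth_J (hη : ContDiff ℝ ∞ η) (i j : Fin 3) : ContDiff ℝ ∞ (fun p => Jm η p i j) := by
  have h : ContDiff ℝ ∞ (⇑(EuclideanSpace.proj (𝕜 := ℝ) j) ∘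
      fun p => fderiv ℝ η p (0, EuclideanSpace.single i 1)) :=
    (EuclideanSpace.proj (𝕜 := ℝ) j).contDiff.comp
      (smooth_fderiv_apply hη (0, EuclideanSpace.single i 1))
  exact h

lemma smooth_det (hη : ContDiff ℝ ∞ η) : ContDiff ℝ ∞ (fun p => (Jm η p).det) := by
  simp only [Matrix.det_fin_three]
  repeat' first
  | exact smooth_J hη _ _
  | apply ContDiff.add
  | apply ContDiff.sub
  | apply ContDiff.neg
  | apply ContDiff.mul

lemma smooth_adj (hη : ContDiff ℝ ∞ η) (i j : Fin 3) :
    ContDiff ℝ ∞ (fun p => (Jm η p).adjugate i j) := by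
  fin_cases i <;> fin_cases j <;>
  · simp only [Matrix.adjugate_fin_three, Matrix.cons_val', Matrix.cons_val_zero,
      Matrix.cons_val_one, Matrix.head_cons, Matrix.empty_val', Matrix.cons_val_fin_one,
      Matrix.head_fin_const, Matrix.of_apply, Matrix.cons_val_two, Matrix.tail_cons]
    repeat' first
    | exact smooth_J hη _ _
    | apply ContDiff.add
    | apply ContDiff.sub
    | apply ContDiff.neg
    | apply ContDiff.mul

lemma smooth_B (hη : ContDiff ℝ ∞ η) (hinv : ∀ p : ℝ × E3, IsUnit (Jm η p).det) (i j : Fin 3) :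
    ContDiff ℝ ∞ (fun p => (Jm η p)⁻¹ i j) := by
  have h : (fun p => (Jm η p)⁻¹ i j)
      = fun p => ((Jm η p).det)⁻¹ * (Jm η p).adjugate i j := by
    funext p
    rw [Matrix.inv_def, Matrix.smul_apply, Ring.inverse_eq_inv', smul_eq_mul]
  rw [h]
  exact ((smooth_det hη).inv fun p => (hinv p).ne_zero).mul (smooth_adj hη i j)

lemma fderiv_inv_entry (hη : ContDiff ℝ ∞ η) (hinv : ∀ p : ℝ × E3, IsUnit (Jm η p).det)
    (p : ℝ × E3) (u : ℝ × E3) (i a : Fin 3) :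
    fderiv ℝ (fun z => (Jm η z)⁻¹ i a) p u
      = -∑ b, ∑ c, (Jm η p)⁻¹ i b * fderiv ℝ (fun z => Jm η z b c) p u * (Jm η p)⁻¹ c a := by
  have hJd : ∀ (b c : Fin 3) (z : ℝ × E3), DifferentiableAt ℝ (fun z => Jm η z b c) z :=
    fun b c z => ((smooth_J hη b c).differentiable (by norm_num)).differentiableAt
  have hBd : ∀ (b c : Fin 3) (z : ℝ × E3), DifferentiableAt ℝ (fun z => (Jm η z)⁻¹ b c) z :=
    fun b c z => ((smooth_B hη hinv b c).differentiable (by norm_num)).differentiableAt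
  have hsum0 : ∀ b a' : Fin 3,
      ∑ c, (fderiv ℝ (fun z => Jm η z b c) p u * (Jm η p)⁻¹ c a'
        + Jm η p b c * fderiv ℝ (fun z => (Jm η z)⁻¹ c a') p u) = 0 := by
    intro b a'
    have hfun : (fun z => ∑ c, Jm η z b c * (Jm η z)⁻¹ c a')
        = fun _ => (1 : Matrix (Fin 3) (Fin 3) ℝ) b a' := by
      funext z
      rw [← Matrix.mul_apply, Matrix.mul_nonsing_inv _ (hinv z)]
    have h0 : fderiv ℝ (fun z => ∑ c, Jm η z b c * (Jm η z)⁻¹ c a') p u = 0 := by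
      rw [hfun, fderiv_fun_const]
      simp
    rw [fderiv_sum_apply3 (fun c => ((hJd b c p).fun_mul (hBd c a' p))) u] at h0
    rw [← h0]
    exact Finset.sum_congr rfl fun c _ =>
      (fderiv_mul_apply' (hJd b c p) (hBd c a' p) u).symm
  have hBJ : ∀ c : Fin 3, ∑ b, (Jm η p)⁻¹ i b * Jm η p b c = if i = c then 1 else 0 := by
    intro c
    rw [← Matrix.mul_apply, Matrix.nonsing_inv_mul _ (hinv p), Matrix.one_apply]
  calc fderiv ℝ (fun z => (Jm η z)⁻¹ i a) p u
      = ∑ c, (if i = c then (1:ℝ) else 0) * fderiv ℝ (fun z => (Jm η z)⁻¹ c a) p u := by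
        simp [Finset.sum_ite_eq]
    _ = ∑ c, ∑ b, (Jm η p)⁻¹ i b * (Jm η p b c * fderiv ℝ (fun z => (Jm η z)⁻¹ c a) p u) := by
        refine Finset.sum_congr rfl fun c _ => ?_
        rw [← hBJ c, Finset.sum_mul]
        exact Finset.sum_congr rfl fun b _ => by ring
    _ = ∑ b, (Jm η p)⁻¹ i b * ∑ c, Jm η p b c * fderiv ℝ (fun z => (Jm η z)⁻¹ c a) p u := by
        rw [Finset.sum_comm]
        exact Finset.sum_congr rfl fun b _ => by rw [Finset.mul_sum]
    _ = ∑ b, (Jm η p)⁻¹ i b * -(∑ c, fderiv ℝ (fun z => Jm η z b c) p u * (Jm η p)⁻¹ c a) := by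
        refine Finset.sum_congr rfl fun b _ => ?_
        congr 1
        have := hsum0 b a
        rw [Finset.sum_add_distrib] at this
        linarith
    _ = -∑ b, ∑ c, (Jm η p)⁻¹ i b * fderiv ℝ (fun z => Jm η z b c) p u * (Jm η p)⁻¹ c a := by
        rw [← Finset.sum_neg_distrib]
        refine Finset.sum_congr rfl fun b _ => ?_
        rw [mul_neg, Finset.mul_sum]
        congr 1
        exact Finset.sum_congr rfl fun c _ => by ring

lemma Jm_zero (hη : ContDiff ℝ ∞ η) (hid : ∀ y : E3, η (0, y) = y) (x : E3) :
    Jm η (0, x) = 1 := by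
  have hcomp : η ∘ ⇑(ContinuousLinearMap.inr ℝ ℝ E3) = id := funext fun y => hid y
  have hd : fderiv ℝ (η ∘ ⇑(ContinuousLinearMap.inr ℝ ℝ E3)) x = ContinuousLinearMap.id ℝ E3 := by
    rw [hcomp, fderiv_id]
  rw [fderiv_comp x ((hη.differentiable (by norm_num)).differentiableAt)
    (ContinuousLinearMap.inr ℝ ℝ E3).differentiableAt, ContinuousLinearMap.fderiv] at hd
  ext i j
  have h2 := congrArg (fun L : E3 →L[ℝ] E3 => L (EuclideanSpace.single i 1) j) hd
  simp only [ContinuousLinearMap.comp_apply, ContinuousLinearMap.inr_apply,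
    ContinuousLinearMap.id_apply] at h2
  have h3 : Jm η (0, x) i j = fderiv ℝ η ((0 : ℝ), x) ((0 : ℝ), EuclideanSpace.single i 1) j := rfl
  rw [h3, h2, Matrix.one_apply, EuclideanSpace.single_apply]
  simp [eq_comm]

end Jacobian
section VanishAndStep

variable {η v H : ℝ × E3 → E3} {q : ℝ × E3 → ℝ}

lemma zeroU2 (hη : ContDiff ℝ ∞ η) (hq : ContDiff ℝ ∞ q) (p : ℝ × E3) (m : Fin 3) :
    ∑ j, ∑ k, ∑ l, ∑ a, eps m j k * (Jm η p)⁻¹ j l *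
      ((Jm η p)⁻¹ k a *
        fderiv ℝ (fun z => fderiv ℝ q z (0, EuclideanSpace.single a 1)) p
          (0, EuclideanSpace.single l 1)) = 0 := by
  have hS : ∀ l a : Fin 3,
      fderiv ℝ (fun z => fderiv ℝ q z (0, EuclideanSpace.single a 1)) p
          (0, EuclideanSpace.single l 1)
        = fderiv ℝ (fun z => fderiv ℝ q z (0, EuclideanSpace.single l 1)) p
          (0, EuclideanSpace.single a 1) := fun l a => fderiv_swap hq p _ _
  have h := contract_eq_zero m (fun j l => (Jm η p)⁻¹ j l)
    (fun l a => fderiv ℝ (fun z => fderiv ℝ q z (0, EuclideanSpace.single a 1)) p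
      (0, EuclideanSpace.single l 1)) hS
  refine Eq.trans ?_ h
  exact Finset.sum_congr rfl fun j _ => Finset.sum_congr rfl fun k _ =>
    Finset.sum_congr rfl fun l _ => Finset.sum_congr rfl fun a _ => by ring

lemma zeroU1 (hη : ContDiff ℝ ∞ η) (hq : ContDiff ℝ ∞ q)
    (hinv : ∀ p : ℝ × E3, IsUnit (Jm η p).det) (p : ℝ × E3) (m : Fin 3) :
    ∑ j, ∑ k, ∑ l, ∑ a, eps m j k * (Jm η p)⁻¹ j l *
      (fderiv ℝ (fun z => (Jm η z)⁻¹ k a) p (0, EuclideanSpace.single l 1) *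
        fderiv ℝ q p (0, EuclideanSpace.single a 1)) = 0 := by
  set S' : Fin 3 → Fin 3 → ℝ := fun l b => ∑ c, ∑ a,
    fderiv ℝ (fun z => Jm η z b c) p (0, EuclideanSpace.single l 1) *
      ((Jm η p)⁻¹ c a * fderiv ℝ q p (0, EuclideanSpace.single a 1)) with hS'def
  have hDJ : ∀ l b c : Fin 3,
      fderiv ℝ (fun z => Jm η z b c) p (0, EuclideanSpace.single l 1)
        = fderiv ℝ (fun z => Jm η z l c) p (0, EuclideanSpace.single b 1) := by
    intro l b c
    have hfun : ∀ b' : Fin 3, (fun z => Jm η z b' c)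
        = fun z => fderiv ℝ (fun z' => η z' c) z (0, EuclideanSpace.single b' 1) := by
      intro b'
      funext z
      exact (fderiv_coord ((hη.differentiable (by norm_num)).differentiableAt) c _).symm
    rw [hfun b, hfun l]
    exact fderiv_swap (smooth_coord hη c) p _ _
  have hS'sym : ∀ l b, S' l b = S' b l := by
    intro l b
    rw [hS'def]
    exact Finset.sum_congr rfl fun c _ => Finset.sum_congr rfl fun a _ => by rw [hDJ]
  have hinner : ∀ j k : Fin 3,
      ∑ l, ∑ a, eps m j k * (Jm η p)⁻¹ j l *
        (fderiv ℝ (fun z => (Jm η z)⁻¹ k a) p (0, EuclideanSpace.single l 1) *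
          fderiv ℝ q p (0, EuclideanSpace.single a 1))
      = -∑ l, ∑ b, eps m j k * (Jm η p)⁻¹ j l * (Jm η p)⁻¹ k b * S' l b := by
    intro j k
    simp only [fderiv_inv_entry hη hinv, hS'def]
    simp only [Fin.sum_univ_three]
    ring
  calc ∑ j, ∑ k, ∑ l, ∑ a, eps m j k * (Jm η p)⁻¹ j l *
      (fderiv ℝ (fun z => (Jm η z)⁻¹ k a) p (0, EuclideanSpace.single l 1) *
        fderiv ℝ q p (0, EuclideanSpace.single a 1))
      = ∑ j, ∑ k, -∑ l, ∑ b, eps m j k * (Jm η p)⁻¹ j l * (Jm η p)⁻¹ k b * S' l b :=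
        Finset.sum_congr rfl fun j _ => Finset.sum_congr rfl fun k _ => hinner j k
    _ = -∑ j, ∑ k, ∑ l, ∑ b, eps m j k * (Jm η p)⁻¹ j l * (Jm η p)⁻¹ k b * S' l b := by
        simp only [Finset.sum_neg_distrib]
    _ = 0 := by
        rw [contract_eq_zero m (fun j l => (Jm η p)⁻¹ j l) S' hS'sym, neg_zero]

end VanishAndStep
section StepDW

variable {η v H : ℝ × E3 → E3} {q : ℝ × E3 → ℝ}

lemma step_dW (hη : ContDiff ℝ ∞ η) (hv : ContDiff ℝ ∞ v) (hq : ContDiff ℝ ∞ q)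
    (hH : ContDiff ℝ ∞ H) (hinv : ∀ p : ℝ × E3, IsUnit (Jm η p).det)
    (heq : ∀ (p : ℝ × E3) (i : Fin 3),
      fderiv ℝ v p ((1 : ℝ), (0 : E3)) i +
          ∑ j, (Jm η p)⁻¹ i j * fderiv ℝ q p (0, EuclideanSpace.single j 1)
        = H p i)
    (p : ℝ × E3) (l k : Fin 3) :
    fderiv ℝ (fun z => fderiv ℝ (fun z' => v z' k) z (0, EuclideanSpace.single l 1)) p
        ((1 : ℝ), (0 : E3))
      = fderiv ℝ (fun z => H z k) p (0, EuclideanSpace.single l 1)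
        - ∑ a, (fderiv ℝ (fun z => (Jm η z)⁻¹ k a) p (0, EuclideanSpace.single l 1) *
              fderiv ℝ q p (0, EuclideanSpace.single a 1)
            + (Jm η p)⁻¹ k a *
              fderiv ℝ (fun z => fderiv ℝ q z (0, EuclideanSpace.single a 1)) p
                (0, EuclideanSpace.single l 1)) := by
  rw [fderiv_swap (smooth_coord hv k) p (0, EuclideanSpace.single l 1) ((1 : ℝ), (0 : E3))]
  have hfun : (fun z => fderiv ℝ (fun z' => v z' k) z ((1 : ℝ), (0 : E3)))
      = fun z => H z k - ∑ a, (Jm η z)⁻¹ k a * fderiv ℝ q z (0, EuclideanSpace.single a 1) := by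
    funext z
    rw [fderiv_coord ((hv.differentiable (by norm_num)).differentiableAt) k _]
    linarith [heq z k]
  rw [hfun]
  have hHd : DifferentiableAt ℝ (fun z => H z k) p :=
    ((smooth_coord hH k).differentiable (by norm_num)).differentiableAt
  have hBd : ∀ a : Fin 3, DifferentiableAt ℝ (fun z => (Jm η z)⁻¹ k a) p :=
    fun a => ((smooth_B hη hinv k a).differentiable (by norm_num)).differentiableAt
  have hqd : ∀ a : Fin 3,
      DifferentiableAt ℝ (fun z => fderiv ℝ q z (0, EuclideanSpace.single a 1)) p :=
    fun a => ((smooth_fderiv_apply hq _).differentiable (by norm_num)).differentiableAt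
  have hsumd : DifferentiableAt ℝ
      (fun z => ∑ a, (Jm η z)⁻¹ k a * fderiv ℝ q z (0, EuclideanSpace.single a 1)) p := by
    exact DifferentiableAt.fun_sum fun a _ => (hBd a).fun_mul (hqd a)
  rw [fderiv_sub_apply' hHd hsumd, fderiv_sum_apply3 (fun a => (hBd a).fun_mul (hqd a))]
  congr 1
  exact Finset.sum_congr rfl fun a _ => fderiv_mul_apply' (hBd a) (hqd a) _

end StepDW

/-- transport representation of the Lagrangian curl: if `v` solves
`∂ₜv + ∇_A q = H` with `A(t) = (Dη)⁻¹` and `η = id + ∫₀ᵗ v`, then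
`(curl_A v)(t) = curl v(0) + ∫₀ᵗ ε^{·ij} ∂_l v^j ∂ₜA_i^l ds + ∫₀ᵗ (curl_A H) ds`. -/
theorem lagrangian_curl_transport
    (η v H : ℝ × E3 → E3) (q : ℝ × E3 → ℝ)
    (hη : ∀ n : ℕ, ContDiff ℝ n η) (hv : ∀ n : ℕ, ContDiff ℝ n v)
    (hq : ∀ n : ℕ, ContDiff ℝ n q) (hH : ∀ n : ℕ, ContDiff ℝ n H)
    (hflow : ∀ p : ℝ × E3, η p = p.2 + ∫ s in (0 : ℝ)..p.1, v (s, p.2))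
    (hinv : ∀ p : ℝ × E3, IsUnit (Jm η p).det)
    (heq : ∀ (p : ℝ × E3) (i : Fin 3),
      fderiv ℝ v p ((1 : ℝ), (0 : E3)) i +
          ∑ j, (Jm η p)⁻¹ i j * fderiv ℝ q p (0, EuclideanSpace.single j 1)
        = H p i) :
    ∀ (t : ℝ) (x : E3) (m : Fin 3),
      curlA η v (t, x) m
        = curlE v (0, x) m
          + (∫ s in (0 : ℝ)..t, ∑ i, ∑ j, ∑ l,
              eps m i j * fderiv ℝ v (s, x) (0, EuclideanSpace.single l 1) j *
                deriv (fun τ => (Jm η (τ, x))⁻¹ i l) s)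
          + ∫ s in (0 : ℝ)..t, curlA η H (s, x) m := by
  intro t x m
  have hη' : ContDiff ℝ ∞ η := contDiff_infty.mpr hη
  have hv' : ContDiff ℝ ∞ v := contDiff_infty.mpr hv
  have hq' : ContDiff ℝ ∞ q := contDiff_infty.mpr hq
  have hH' : ContDiff ℝ ∞ H := contDiff_infty.mpr hH
  have hvdiff : Differentiable ℝ v := hv'.differentiable (by norm_num)
  have hHdiff : Differentiable ℝ H := hH'.differentiable (by norm_num)
  -- time derivatives of the inverse Jacobian entries
  have hBdiff : ∀ i l : Fin 3, Differentiable ℝ (fun z => (Jm η z)⁻¹ i l) :=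
    fun i l => (smooth_B hη' hinv i l).differentiable (by norm_num)
  have hBder : ∀ (i l : Fin 3) (s : ℝ), HasDerivAt (fun τ => (Jm η (τ, x))⁻¹ i l)
      (fderiv ℝ (fun z => (Jm η z)⁻¹ i l) (s, x) ((1 : ℝ), (0 : E3))) s :=
    fun i l s => hasDerivAt_slice (hBdiff i l) x s
  have hBder_eq : ∀ (i l : Fin 3) (s : ℝ), deriv (fun τ => (Jm η (τ, x))⁻¹ i l) s
      = fderiv ℝ (fun z => (Jm η z)⁻¹ i l) (s, x) ((1 : ℝ), (0 : E3)) :=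
    fun i l s => (hBder i l s).deriv
  -- time derivatives of the velocity gradient entries
  have hwv_smooth : ∀ l k : Fin 3, ContDiff ℝ ∞
      (fun z => fderiv ℝ (fun z' => v z' k) z (0, EuclideanSpace.single l 1)) :=
    fun l k => smooth_fderiv_apply (smooth_coord hv' k) _
  have hWder : ∀ (l k : Fin 3) (s : ℝ), HasDerivAt
      (fun τ => fderiv ℝ (fun z' => v z' k) (τ, x) (0, EuclideanSpace.single l 1))
      (fderiv ℝ (fun z => fderiv ℝ (fun z' => v z' k) z (0, EuclideanSpace.single l 1))
        (s, x) ((1 : ℝ), (0 : E3))) s :=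
    fun l k s => hasDerivAt_slice ((hwv_smooth l k).differentiable (by norm_num)) x s
  -- the Lagrangian curl as a function of time, rewritten coordinatewise
  have hfeq : (fun τ => curlA η v (τ, x) m) = fun τ => ∑ j, ∑ k, ∑ l,
      eps m j k * (Jm η (τ, x))⁻¹ j l *
        fderiv ℝ (fun z' => v z' k) (τ, x) (0, EuclideanSpace.single l 1) := by
    funext τ
    exact Finset.sum_congr rfl fun j _ => Finset.sum_congr rfl fun k _ =>
      Finset.sum_congr rfl fun l _ => by rw [fderiv_coord (hvdiff (τ, x)) k]
  -- the derivative of the Lagrangian curl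
  have hD : ∀ s : ℝ, HasDerivAt (fun τ => curlA η v (τ, x) m)
      (∑ j, ∑ k, ∑ l,
        (eps m j k * fderiv ℝ (fun z => (Jm η z)⁻¹ j l) (s, x) ((1 : ℝ), (0 : E3)) *
            fderiv ℝ (fun z' => v z' k) (s, x) (0, EuclideanSpace.single l 1)
          + eps m j k * (Jm η (s, x))⁻¹ j l *
            fderiv ℝ (fun z => fderiv ℝ (fun z' => v z' k) z (0, EuclideanSpace.single l 1))
              (s, x) ((1 : ℝ), (0 : E3)))) s := by
    intro s
    rw [hfeq]
    refine HasDerivAt.fun_sum fun j _ => HasDerivAt.fun_sum fun k _ => HasDerivAt.fun_sum fun l _ => ?_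
    exact ((hBder j l s).const_mul (eps m j k)).fun_mul (hWder l k s)
  -- the derivative equals the two integrands
  have hkey : ∀ s : ℝ,
      (∑ j, ∑ k, ∑ l,
        (eps m j k * fderiv ℝ (fun z => (Jm η z)⁻¹ j l) (s, x) ((1 : ℝ), (0 : E3)) *
            fderiv ℝ (fun z' => v z' k) (s, x) (0, EuclideanSpace.single l 1)
          + eps m j k * (Jm η (s, x))⁻¹ j l *
            fderiv ℝ (fun z => fderiv ℝ (fun z' => v z' k) z (0, EuclideanSpace.single l 1))
              (s, x) ((1 : ℝ), (0 : E3))))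
      = (∑ i, ∑ j, ∑ l,
          eps m i j * fderiv ℝ v (s, x) (0, EuclideanSpace.single l 1) j *
            deriv (fun τ => (Jm η (τ, x))⁻¹ i l) s)
        + curlA η H (s, x) m := by
    intro s
    simp only [Finset.sum_add_distrib]
    congr 1
    · -- transport term
      exact Finset.sum_congr rfl fun j _ => Finset.sum_congr rfl fun k _ =>
        Finset.sum_congr rfl fun l _ => by
          rw [hBder_eq j l s, fderiv_coord (hvdiff (s, x)) k]
          ring
    · -- pressure term vanishes, leaving curl of H
      have e1 : ∀ j k l : Fin 3,
          eps m j k * (Jm η (s, x))⁻¹ j l *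
            fderiv ℝ (fun z => fderiv ℝ (fun z' => v z' k) z (0, EuclideanSpace.single l 1))
              (s, x) ((1 : ℝ), (0 : E3))
          = eps m j k * (Jm η (s, x))⁻¹ j l *
              fderiv ℝ (fun z => H z k) (s, x) (0, EuclideanSpace.single l 1)
            - (∑ a, eps m j k * (Jm η (s, x))⁻¹ j l *
                (fderiv ℝ (fun z => (Jm η z)⁻¹ k a) (s, x) (0, EuclideanSpace.single l 1) *
                  fderiv ℝ q (s, x) (0, EuclideanSpace.single a 1)))
            - (∑ a, eps m j k * (Jm η (s, x))⁻¹ j l *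
                ((Jm η (s, x))⁻¹ k a *
                  fderiv ℝ (fun z => fderiv ℝ q z (0, EuclideanSpace.single a 1)) (s, x)
                    (0, EuclideanSpace.single l 1))) := by
        intro j k l
        rw [step_dW hη' hv' hq' hH' hinv heq (s, x) l k]
        simp only [Finset.sum_add_distrib, mul_sub, mul_add, Finset.mul_sum]
        ring
      calc ∑ j, ∑ k, ∑ l, eps m j k * (Jm η (s, x))⁻¹ j l *
            fderiv ℝ (fun z => fderiv ℝ (fun z' => v z' k) z (0, EuclideanSpace.single l 1))
              (s, x) ((1 : ℝ), (0 : E3))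
          = ∑ j, ∑ k, ∑ l,
            (eps m j k * (Jm η (s, x))⁻¹ j l *
              fderiv ℝ (fun z => H z k) (s, x) (0, EuclideanSpace.single l 1)
            - (∑ a, eps m j k * (Jm η (s, x))⁻¹ j l *
                (fderiv ℝ (fun z => (Jm η z)⁻¹ k a) (s, x) (0, EuclideanSpace.single l 1) *
                  fderiv ℝ q (s, x) (0, EuclideanSpace.single a 1)))
            - (∑ a, eps m j k * (Jm η (s, x))⁻¹ j l *
                ((Jm η (s, x))⁻¹ k a *
                  fderiv ℝ (fun z => fderiv ℝ q z (0, EuclideanSpace.single a 1)) (s, x)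
                    (0, EuclideanSpace.single l 1)))) :=
            Finset.sum_congr rfl fun j _ => Finset.sum_congr rfl fun k _ =>
              Finset.sum_congr rfl fun l _ => e1 j k l
        _ = (∑ j, ∑ k, ∑ l, eps m j k * (Jm η (s, x))⁻¹ j l *
              fderiv ℝ (fun z => H z k) (s, x) (0, EuclideanSpace.single l 1))
            - (∑ j, ∑ k, ∑ l, ∑ a, eps m j k * (Jm η (s, x))⁻¹ j l *
                (fderiv ℝ (fun z => (Jm η z)⁻¹ k a) (s, x) (0, EuclideanSpace.single l 1) *
                  fderiv ℝ q (s, x) (0, EuclideanSpace.single a 1)))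
            - (∑ j, ∑ k, ∑ l, ∑ a, eps m j k * (Jm η (s, x))⁻¹ j l *
                ((Jm η (s, x))⁻¹ k a *
                  fderiv ℝ (fun z => fderiv ℝ q z (0, EuclideanSpace.single a 1)) (s, x)
                    (0, EuclideanSpace.single l 1))) := by
            simp only [Finset.sum_sub_distrib]
        _ = curlA η H (s, x) m := by
            rw [zeroU1 hη' hq' hinv (s, x) m, zeroU2 hη' hq' (s, x) m, sub_zero, sub_zero]
            unfold curlA
            exact Finset.sum_congr rfl fun j _ => Finset.sum_congr rfl fun k _ =>
              Finset.sum_congr rfl fun l _ => by rw [fderiv_coord (hHdiff (s, x)) k]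
  -- continuity of the integrands
  have hcont1 : Continuous (fun s : ℝ => ∑ i, ∑ j, ∑ l,
      eps m i j * fderiv ℝ v (s, x) (0, EuclideanSpace.single l 1) j *
        deriv (fun τ => (Jm η (τ, x))⁻¹ i l) s) := by
    refine continuous_finset_sum _ fun i _ => continuous_finset_sum _ fun j _ =>
      continuous_finset_sum _ fun l _ => ?_
    have hslice : Continuous (fun s : ℝ => ((s : ℝ), x)) :=
      continuous_id.prodMk continuous_const
    have hc1 : Continuous fun s : ℝ =>
        fderiv ℝ v (s, x) (0, EuclideanSpace.single l 1) j := by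
      have h0 : Continuous fun p : ℝ × E3 =>
          (EuclideanSpace.proj (𝕜 := ℝ) j) (fderiv ℝ v p (0, EuclideanSpace.single l 1)) :=
        (EuclideanSpace.proj (𝕜 := ℝ) j).continuous.comp
          (smooth_fderiv_apply hv' (0, EuclideanSpace.single l 1)).continuous
      exact h0.comp hslice
    have hc2 : Continuous fun s : ℝ => deriv (fun τ => (Jm η (τ, x))⁻¹ i l) s := by
      have heq2 : (fun s : ℝ => deriv (fun τ => (Jm η (τ, x))⁻¹ i l) s)
          = fun s : ℝ => fderiv ℝ (fun z => (Jm η z)⁻¹ i l) (s, x) ((1 : ℝ), (0 : E3)) :=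
        funext fun s => hBder_eq i l s
      rw [heq2]
      exact ((smooth_fderiv_apply (smooth_B hη' hinv i l)
        ((1 : ℝ), (0 : E3))).continuous).comp hslice
    exact (continuous_const.mul hc1).mul hc2
  have hcont2 : Continuous (fun s : ℝ => curlA η H (s, x) m) := by
    unfold curlA
    refine continuous_finset_sum _ fun j _ => continuous_finset_sum _ fun k _ =>
      continuous_finset_sum _ fun l _ => ?_
    have hslice : Continuous (fun s : ℝ => ((s : ℝ), x)) :=
      continuous_id.prodMk continuous_const
    have hcB : Continuous fun s : ℝ => (Jm η (s, x))⁻¹ j l :=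
      ((smooth_B hη' hinv j l).continuous).comp hslice
    have hcH : Continuous fun s : ℝ =>
        fderiv ℝ H (s, x) (0, EuclideanSpace.single l 1) k := by
      have h0 : Continuous fun p : ℝ × E3 =>
          (EuclideanSpace.proj (𝕜 := ℝ) k) (fderiv ℝ H p (0, EuclideanSpace.single l 1)) :=
        (EuclideanSpace.proj (𝕜 := ℝ) k).continuous.comp
          (smooth_fderiv_apply hH' (0, EuclideanSpace.single l 1)).continuous
      exact h0.comp hslice
    exact (continuous_const.mul hcB).mul hcH
  have hint1 := hcont1.intervalIntegrable (μ := volume) 0 t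
  have hint2 := hcont2.intervalIntegrable (μ := volume) 0 t
  -- fundamental theorem of calculus
  have hFTC := intervalIntegral.integral_eq_sub_of_hasDerivAt
    (f := fun τ => curlA η v (τ, x) m)
    (f' := fun s => (∑ i, ∑ j, ∑ l,
        eps m i j * fderiv ℝ v (s, x) (0, EuclideanSpace.single l 1) j *
          deriv (fun τ => (Jm η (τ, x))⁻¹ i l) s) + curlA η H (s, x) m)
    (a := 0) (b := t)
    (fun s _ => by have h := hD s; rw [hkey s] at h; exact h)
    ((hcont1.add hcont2).intervalIntegrable (μ := volume) 0 t)
  rw [intervalIntegral.integral_add hint1 hint2] at hFTC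
  -- initial value
  have hid : ∀ y : E3, η (0, y) = y := by
    intro y
    rw [hflow (0, y)]
    simp
  have hJ0 : Jm η ((0 : ℝ), x) = 1 := Jm_zero hη' hid x
  have hf0 : curlA η v ((0 : ℝ), x) m = curlE v (0, x) m := by
    unfold curlA curlE
    rw [hJ0, inv_one]
    refine Finset.sum_congr rfl fun j _ => Finset.sum_congr rfl fun k _ => ?_
    simp [Matrix.one_apply, mul_ite, Finset.sum_ite_eq]
  simp only at hFTC
  linarith [hFTC, hf0]
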